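/- Let (E,ℒ,𝒜) be a weakly left-resolving, normal labelled space. If s = (α,A,β) ∈ S and e₁ = (βδ₁,B₁,βδ₁), …, eₙ = (βδₙ,Bₙ,βδₙ) ∈ E(S) are such that Bᵢ ⊆ r(A,δᵢ) for each i, then σ^{|α|} restricted to V_{ss*:f₁,…,fₙ} is injective, σ^{|β|} restricted to V_{s*s:e₁,…,eₙ} is injective, and Z_{s:e₁,…,eₙ} = 𝒱(V_{ss*:f₁,…,fₙ}, V_{s*s:e₁,…,eₙ}, |α|, |β|), where f₁ = (αδ₁,B₁,αδ₁), …, fₙ = (αδₙ,Bₙ,αδₙ). -/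

import Mathlib

/-!
For a filter `ξ` containing `(α, X, α)`, the iterate `σ^{|α|}` is the cutting map `H_{[α]}`, and
`ξ` can be recovered from `H_{[α]}(ξ)`: an element at a level `αδ` is read off the cut directly,
and an element `(u, C, u)` at a prefix `u` of `α = ut` is recovered from `(α, r(C, t) ∩ X, α)`,
which lies in the cut, by pushing it back down to level `u`; weak left-resolvingness makes
`r(C ∩ r(u), t) = r(C, t) ∩ r(α)`, so this push-down is possible. This gives both injectivity
statements.

For the equality of basic sets, an identity of cuts `H_{[α]}(η) = H_{[β]}(ξ)` carries
`(βδ, C, βδ) ∈ ξ` to `(αδ, C, αδ) ∈ η` whenever `C ∈ 𝒜^{αδ}`, and conversely. This turns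
`s*s ∈ ξ` into `ss* ∈ η` and `eᵢ ∉ ξ` into `fᵢ ∉ η`, and it shows that the words of `η` and `ξ`
are `αγ` and `βγ` for a common tail `γ`.
-/

open Classical

universe u v w

/-! ## Words over an alphabet -/

/-- Finite-or-infinite words over the alphabet `A`: `Sum.inl l` is the finite word `l`
(with `[]` playing the role of the empty word `ω`), and `Sum.inr f` is the infinite word `f`. -/
abbrev Word (A : Type w) := List A ⊕ (ℕ → A)

/-- The length `|α| ∈ ℕ∞` of a word. -/
def wlength {A : Type w} : Word A → ℕ∞ :=
  Sum.elim (fun l => (l.length : ℕ∞)) fun _ => ⊤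

/-- The finite prefix `α_{1,n}` of a word `α`. -/
def wprefix {A : Type w} : Word A → ℕ → List A :=
  Sum.elim (fun l n => l.take n) fun f n => List.ofFn fun i : Fin n => f i

/-- Concatenation `αβ` of a finite word `α` with a word `β`. -/
def wappend {A : Type w} (α : List A) : Word A → Word A :=
  Sum.elim (fun l => Sum.inl (α ++ l)) fun f =>
    Sum.inr fun n => if h : n < α.length then α.get ⟨n, h⟩ else f (n - α.length)

/-- `β` is a beginning (finite prefix) of the word `α`. -/
def WPrefix {A : Type w} (β : List A) : Word A → Prop :=
  Sum.elim (fun l => β <+: l) fun f => β = List.ofFn fun i : Fin β.length => f i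

/-! ## Triples -/

/-- Formal triples `(α, X, β)` together with a zero element; the inverse semigroup `S`
of a labelled space consists of such elements. -/
inductive Tr (V : Type u) (A : Type w) where
  | zero : Tr V A
  | mk : List A → Set V → List A → Tr V A

/-- The involution `(α,A,β)* = (β,A,α)` (fixing `0`). -/
def Tr.tstar {V : Type u} {A : Type w} : Tr V A → Tr V A
  | .zero => .zero
  | .mk α X β => .mk β X α

/-! ## Labelled spaces -/

/-- The data of a labelled space `(E, ℒ, 𝒜)`: a directed graph on nonempty vertex/edge
sets, a surjective labelling map onto the alphabet `A`, and a family `𝒜` of subsets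
of the vertex set. -/
structure LblSp (V : Type u) (E : Type v) (A : Type w) where
  src : E → V
  rng : E → V
  lab : E → A
  lab_surj : Function.Surjective lab
  nonempty_V : Nonempty V
  nonempty_E : Nonempty E
  𝒜 : Set (Set V)

namespace LblSp

variable {V : Type u} {Ed : Type v} {A : Type w} (Λ : LblSp V Ed A)

/-- `α ≠ ω` is the label of some finite path of the graph. -/
def IsPathLabel (α : List A) : Prop :=
  ∃ l : List Ed, l ≠ [] ∧ List.Chain' (fun e f => Λ.rng e = Λ.src f) l ∧ l.map Λ.lab = α

/-- `ℒ^*`: the finite labelled paths, together with the empty word. -/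
def LStar : Set (List A) := {α | α = [] ∨ Λ.IsPathLabel α}

/-- `ℒ^∞`: the infinite labelled paths. -/
def LInfty : Set (ℕ → A) :=
  {f | ∃ e : ℕ → Ed, (∀ n, Λ.rng (e n) = Λ.src (e (n + 1))) ∧ ∀ n, Λ.lab (e n) = f n}

/-- `ℒ^{≤∞} = ℒ^* ∪ ℒ^∞`, as a predicate on `Word A`. -/
def IsWordW : Word A → Prop := Sum.elim (· ∈ Λ.LStar) (· ∈ Λ.LInfty)

/-- The relative range `r(X, α)` (with `r(X, ω) = X`). -/
noncomputable def relRange (X : Set V) (α : List A) : Set V :=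
  if α = [] then X
  else {v | ∃ (l : List Ed) (h : l ≠ []), List.Chain' (fun e f => Λ.rng e = Λ.src f) l ∧
        l.map Λ.lab = α ∧ Λ.src (l.head h) ∈ X ∧ Λ.rng (l.getLast h) = v}

/-- The range `r(α) = r(E⁰, α)`. -/
noncomputable def rangeL (α : List A) : Set V := Λ.relRange Set.univ α

/-- `𝒜^α = {X ∈ 𝒜 : X ⊆ r(α)}`. -/
noncomputable def Aset (α : List A) : Set (Set V) := {X | X ∈ Λ.𝒜 ∧ X ⊆ Λ.rangeL α}

/-- `(E, ℒ, 𝒜)` is a labelled space: `𝒜` is closed under finite intersections and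
unions, contains all ranges `r(α)` for `α ∈ ℒ^{≥1}`, and is closed under relative ranges. -/
structure IsLS : Prop where
  inter_mem : ∀ X ∈ Λ.𝒜, ∀ Y ∈ Λ.𝒜, X ∩ Y ∈ Λ.𝒜
  union_mem : ∀ X ∈ Λ.𝒜, ∀ Y ∈ Λ.𝒜, X ∪ Y ∈ Λ.𝒜
  range_mem : ∀ α ∈ Λ.LStar, α ≠ [] → Λ.rangeL α ∈ Λ.𝒜
  relRange_mem : ∀ X ∈ Λ.𝒜, ∀ α ∈ Λ.LStar, Λ.relRange X α ∈ Λ.𝒜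

/-- A weakly left-resolving labelled space. -/
structure IsWLR : Prop where
  toIsLS : Λ.IsLS
  wlr : ∀ X ∈ Λ.𝒜, ∀ Y ∈ Λ.𝒜, ∀ α ∈ Λ.LStar, α ≠ [] →
    Λ.relRange (X ∩ Y) α = Λ.relRange X α ∩ Λ.relRange Y α

/-- A weakly left-resolving normal labelled space. -/
structure IsNormal : Prop where
  toIsWLR : Λ.IsWLR
  sdiff_mem : ∀ X ∈ Λ.𝒜, ∀ Y ∈ Λ.𝒜, X \ Y ∈ Λ.𝒜

/-! ## The inverse semigroup `S` -/

/-- The underlying set of the inverse semigroup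
`S = {(α,A,β) : α, β ∈ ℒ^*, A ∈ 𝒜^α ∩ 𝒜^β, A ≠ ∅} ∪ {0}`. -/
def SSet : Set (Tr V A) :=
  {t | t = Tr.zero ∨ ∃ α X β, t = Tr.mk α X β ∧ α ∈ Λ.LStar ∧ β ∈ Λ.LStar ∧
    X ∈ Λ.Aset α ∧ X ∈ Λ.Aset β ∧ X.Nonempty}

/-- The semilattice of idempotents `E(S) = {(α,A,α)} ∪ {0}`. -/
def ESet : Set (Tr V A) :=
  {t | t = Tr.zero ∨ ∃ α X, t = Tr.mk α X α ∧ α ∈ Λ.LStar ∧ X ∈ Λ.Aset α ∧ X.Nonempty}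

/-- The product of `S`. -/
noncomputable def tmul : Tr V A → Tr V A → Tr V A
  | Tr.zero, _ => Tr.zero
  | Tr.mk _ _ _, Tr.zero => Tr.zero
  | Tr.mk α X β, Tr.mk γ Y δ =>
    if β <+: γ ∧ (Λ.relRange X (γ.drop β.length) ∩ Y).Nonempty then
      Tr.mk (α ++ γ.drop β.length) (Λ.relRange X (γ.drop β.length) ∩ Y) δ
    else if γ <+: β ∧ (X ∩ Λ.relRange Y (β.drop γ.length)).Nonempty then
      Tr.mk α (X ∩ Λ.relRange Y (β.drop γ.length)) (δ ++ β.drop γ.length)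
    else Tr.zero

/-! ## Filters in `E(S)`, characters, and the tight spectrum -/

/-- A filter in `E(S)`: a nonempty subset of `E(S) ∖ {0}` closed under products and
upward closed in the natural order (`p ≤ q ↔ pq = p`). -/
def IsFilterES (ξ : Set (Tr V A)) : Prop :=
  ξ.Nonempty ∧ (∀ t ∈ ξ, t ∈ Λ.ESet ∧ t ≠ Tr.zero) ∧
  (∀ p ∈ ξ, ∀ q ∈ ξ, Λ.tmul p q ∈ ξ) ∧
  (∀ p ∈ ξ, ∀ q ∈ Λ.ESet, Λ.tmul p q = p → q ∈ ξ)

/-- An ultrafilter in `E(S)`. -/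
def IsUltraES (ξ : Set (Tr V A)) : Prop :=
  Λ.IsFilterES ξ ∧ ∀ ζ, Λ.IsFilterES ζ → ξ ⊆ ζ → ξ = ζ

/-- The character (indicator function) of a filter. -/
noncomputable def charOf (_Λ : LblSp V Ed A) (ξ : Set (Tr V A)) : Tr V A → Bool :=
  fun t => if t ∈ ξ then true else false

/-- A character of `E(S)`: a nonzero, zero- and meet-preserving `{0,1}`-valued map on
`E(S)` (encoded as a map on triples vanishing outside `E(S)`). -/
def IsChar (φ : Tr V A → Bool) : Prop :=
  (∃ e, φ e = true) ∧ (∀ e, e ∉ Λ.ESet → φ e = false) ∧ φ Tr.zero = false ∧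
  ∀ e ∈ Λ.ESet, ∀ f ∈ Λ.ESet, φ (Λ.tmul e f) = (φ e && φ f)

/-- The tight spectrum `Ê_tight`: the closure, within the space of characters with the
topology of pointwise convergence, of the set of characters of ultrafilters. -/
def tightSpectrum : Set (Tr V A → Bool) :=
  {φ | Λ.IsChar φ} ∩ closure {φ | ∃ ξ, Λ.IsUltraES ξ ∧ φ = Λ.charOf ξ}

/-- A tight filter: a filter whose character lies in the tight spectrum. -/
def IsTightFilter (ξ : Set (Tr V A)) : Prop :=
  Λ.IsFilterES ξ ∧ Λ.charOf ξ ∈ Λ.tightSpectrum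

/-- `ξ_{|β|} = {B : (β, B, β) ∈ ξ}`, the filter of `ξ` at level `β`. -/
def filterAt (_Λ : LblSp V Ed A) (ξ : Set (Tr V A)) (β : List A) : Set (Set V) :=
  {B | Tr.mk β B β ∈ ξ}

/-- `α` is the word associated with the filter `ξ` (i.e. `ξ = ξ^α`): the nonempty finite
beginnings of `α` are exactly the words appearing in elements of `ξ`. -/
def HasWord (_Λ : LblSp V Ed A) (ξ : Set (Tr V A)) (α : Word A) : Prop :=
  ∀ β : List A, β ≠ [] → ((∃ B, Tr.mk β B β ∈ ξ) ↔ WPrefix β α)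

/-! ## Filters and ultrafilters in `𝒜^β` -/

/-- A filter in the Boolean algebra `𝒜^β`. -/
def IsFilterAset (β : List A) (F : Set (Set V)) : Prop :=
  F.Nonempty ∧ F ⊆ Λ.Aset β ∧ (∀ X ∈ F, X.Nonempty) ∧
  (∀ X ∈ F, ∀ Y ∈ F, X ∩ Y ∈ F) ∧ (∀ X ∈ F, ∀ Y ∈ Λ.Aset β, X ⊆ Y → Y ∈ F)

/-- An ultrafilter in `𝒜^β` (an element of `X_β`). -/
def IsUltraAset (β : List A) (F : Set (Set V)) : Prop :=
  Λ.IsFilterAset β F ∧ ∀ G, Λ.IsFilterAset β G → F ⊆ G → F = G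

/-- The gluing map `g_{(α)β}(F) = {C ∩ r(αβ) : C ∈ F}` on ultrafilters. -/
noncomputable def gmap (α β : List A) (F : Set (Set V)) : Set (Set V) :=
  {X | ∃ C ∈ F, X = C ∩ Λ.rangeL (α ++ β)}

/-- The cutting map `h_{[α]β}(F) = {C ∈ 𝒜^β : D ⊆ C for some D ∈ F}` on ultrafilters. -/
noncomputable def hmap (α β : List A) (F : Set (Set V)) : Set (Set V) :=
  {C | C ∈ Λ.Aset β ∧ ∃ D ∈ F, D ⊆ C}

/-! ## Cutting and gluing of (tight) filters in `E(S)` -/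

/-- The cutting map `H_{[α]β} : T^{αβ} → T^{(α)β}` (word-free formulation): the filter
whose family is `η_n = h_{[α]β_{1,n}}(ξ_{n+|α|})`; `H_{[ω]β}` is the identity. -/
noncomputable def Hcut (α : List A) (ξ : Set (Tr V A)) : Set (Tr V A) :=
  if α = [] then ξ
  else {t | ∃ δ B, t = Tr.mk δ B δ ∧ B ∈ Λ.Aset δ ∧
        ∃ D, Tr.mk (α ++ δ) D (α ++ δ) ∈ ξ ∧ D ⊆ B}

/-- The gluing map `G_{(α)β} : T^{(α)β} → T^{αβ}` (word-free formulation): the filter with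
family `η_{|α|+n} = g_{(α)β_{1,n}}(ξ_n)` for `n ≥ 1` and `η_i = f_{α_{1,i}[…]}(…)` for
`i ≤ |α|`, with the two cases according to whether the word of `ξ` is empty (`β = ω`)
or not; `G_{(ω)β}` is the identity. -/
noncomputable def Gglue (α : List A) (ξ : Set (Tr V A)) : Set (Tr V A) :=
  if α = [] then ξ
  else if ∃ (δ : List A) (B : Set V), δ ≠ [] ∧ Tr.mk δ B δ ∈ ξ then
    {t | ∃ δ B, t = Tr.mk δ B δ ∧
      ((α <+: δ ∧ α ≠ δ ∧ ∃ C, Tr.mk (δ.drop α.length) C (δ.drop α.length) ∈ ξ ∧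
          B = C ∩ Λ.rangeL δ) ∨
       (δ <+: α ∧ B ∈ Λ.Aset δ ∧ ∃ (b : A) (C : Set V), Tr.mk [b] C [b] ∈ ξ ∧
          Λ.relRange B (α.drop δ.length ++ [b]) = C ∩ Λ.rangeL (α ++ [b])))}
  else
    {t | ∃ δ B, t = Tr.mk δ B δ ∧ δ <+: α ∧ B ∈ Λ.Aset δ ∧
      ∃ C, Tr.mk [] C [] ∈ ξ ∧ Λ.relRange B (α.drop δ.length) = C ∩ Λ.rangeL α}

/-- `T^β`: the set of tight filters with associated word `β`. -/
def TWord (β : Word A) : Set (Set (Tr V A)) :=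
  {ξ | Λ.IsTightFilter ξ ∧ Λ.HasWord ξ β}

/-- `T^{(α)β} = {ξ ∈ T^β : r(α) ∈ ξ_0}` (equal to `T^β` when `α = ω`), the domain of the
gluing map `G_{(α)β}`. -/
def TGlueDom (α : List A) (β : Word A) : Set (Set (Tr V A)) :=
  {ξ | Λ.IsTightFilter ξ ∧ Λ.HasWord ξ β ∧ (α ≠ [] → Tr.mk [] (Λ.rangeL α) [] ∈ ξ)}

/-! ## The groupoid `Γ` -/

/-- The defining relation of
`Γ = {(ξ^{aγ}, |a|-|b|, η^{bγ}) ∈ T × ℤ × T : H_{[a]γ}(ξ^{aγ}) = H_{[b]γ}(η^{bγ})}`. -/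
def InGamma (η : Set (Tr V A)) (m : ℤ) (ξ : Set (Tr V A)) : Prop :=
  ∃ (a b : List A) (γ : Word A), a ∈ Λ.LStar ∧ b ∈ Λ.LStar ∧ Λ.IsWordW γ ∧
    η ∈ Λ.TWord (wappend a γ) ∧ ξ ∈ Λ.TWord (wappend b γ) ∧
    m = (a.length : ℤ) - (b.length : ℤ) ∧ Λ.Hcut a η = Λ.Hcut b ξ

/-- `Γ` as a set of raw triples. -/
def GammaRaw : Set (Set (Tr V A) × ℤ × Set (Tr V A)) :=
  {p | Λ.InGamma p.1 p.2.1 p.2.2}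

/-- The basic set `Z_{s,e:e₁,…,eₙ}` of `Γ` (raw version), for `s = (μ, X, ν)`:
triples `(η^{μγ}, |μ|-|ν|, ξ^{νγ}) ∈ Γ` with `e ∈ ξ`, `eᵢ ∉ ξ` and
`H_{[μ]γ}(η) = H_{[ν]γ}(ξ)`. -/
noncomputable def ZrawGen (μ ν : List A) (e : Tr V A) (es : List (Tr V A)) :
    Set (Set (Tr V A) × ℤ × Set (Tr V A)) :=
  {p | Λ.InGamma p.1 p.2.1 p.2.2 ∧ p.2.1 = (μ.length : ℤ) - (ν.length : ℤ) ∧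
       e ∈ p.2.2 ∧ (∀ f ∈ es, f ∉ p.2.2) ∧
       ∃ γ : Word A, Λ.HasWord p.1 (wappend μ γ) ∧ Λ.HasWord p.2.2 (wappend ν γ) ∧
         Λ.Hcut μ p.1 = Λ.Hcut ν p.2.2}

/-- `Z_s = Z_{s, s*s}` for `s = (μ, X, ν)` (raw version). -/
noncomputable def Zraw (μ : List A) (X : Set V) (ν : List A) :
    Set (Set (Tr V A) × ℤ × Set (Tr V A)) :=
  Λ.ZrawGen μ ν (Tr.mk ν X ν) []

/-- The basic set `V_{e:e₁,…,eₙ} = U_{e:e₁,…,eₙ} ∩ T` of the tight filter space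
(raw version). -/
def VrawGen (e : Tr V A) (es : List (Tr V A)) : Set (Set (Tr V A)) :=
  {ξ | Λ.IsTightFilter ξ ∧ e ∈ ξ ∧ ∀ f ∈ es, f ∉ ξ}

/-- The shift map `σ : T^{(1)} → T`, `σ(ξ^{aγ}) = H_{[a]γ}(ξ^{aγ})` (extended by the
identity off its domain). -/
noncomputable def sigmaMap (ξ : Set (Tr V A)) : Set (Tr V A) :=
  if h : ∃ a : A, ∃ B : Set V, Tr.mk [a] B [a] ∈ ξ then Λ.Hcut [h.choose] ξ else ξ

/-- The Renault–Deaconu basic set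
`𝒱(X, Y, m, n) = {(η, m-n, ξ) ∈ Γ : (η, ξ) ∈ X × Y, σ^m(η) = σ^n(ξ)}` (raw version). -/
noncomputable def VrdRaw (Xs Ys : Set (Set (Tr V A))) (m n : ℕ) :
    Set (Set (Tr V A) × ℤ × Set (Tr V A)) :=
  {p | Λ.InGamma p.1 p.2.1 p.2.2 ∧ p.2.1 = (m : ℤ) - (n : ℤ) ∧
       p.1 ∈ Xs ∧ p.2.2 ∈ Ys ∧ (Λ.sigmaMap)^[m] p.1 = (Λ.sigmaMap)^[n] p.2.2}

/-! ## The groupoid of germs `𝒢_tight` -/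

/-- The action `θ_s(φ)(e) = φ(s* e s)` of `S` on characters. -/
noncomputable def theta (s : Tr V A) (φ : Tr V A → Bool) : Tr V A → Bool :=
  fun e => if e ∈ Λ.ESet then φ (Λ.tmul (Λ.tmul (Tr.tstar s) e) s) else false

/-- `Ω = {(s, φ) ∈ S × Ê_tight : φ ∈ D_{s*s}}`. -/
noncomputable def Omega : Set (Tr V A × (Tr V A → Bool)) :=
  {p | p.1 ∈ Λ.SSet ∧ p.2 ∈ Λ.tightSpectrum ∧ p.2 (Λ.tmul (Tr.tstar p.1) p.1) = true}

/-- The germ equivalence relation on `Ω`: `(s,φ) ∼ (t,ψ)` iff `φ = ψ` and there is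
`e ∈ E(S)` with `φ(e) = 1` and `se = te`. -/
noncomputable def germEquiv (p q : Tr V A × (Tr V A → Bool)) : Prop :=
  p.2 = q.2 ∧ ∃ e ∈ Λ.ESet, p.2 e = true ∧ Λ.tmul p.1 e = Λ.tmul q.1 e

/-- The map `Φ` at the level of `Ω`: for `t = (β, X, γ)` and `φ` with filter `ξ^α`
(where `α = γα'`), `Φ[t,φ] = ((G_{(β)α'} ∘ H_{[γ]α'})(ξ^α), |β|-|γ|, ξ^α)`. -/
noncomputable def PhiRaw : Tr V A → (Tr V A → Bool) → Set (Tr V A) × ℤ × Set (Tr V A)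
  | Tr.zero, _ => (∅, 0, ∅)
  | Tr.mk β _ γ, φ =>
      (Λ.Gglue β (Λ.Hcut γ {e | φ e = true}), (β.length : ℤ) - (γ.length : ℤ),
        {e | φ e = true})

/-! ## Miscellaneous notions -/

/-- `ℒ(XE¹) = {ℒ(e) : e ∈ E¹, s(e) ∈ X}`. -/
def labE (X : Set V) : Set A := {a | ∃ e, Λ.lab e = a ∧ Λ.src e ∈ X}

/-- The set `E⁰_sink` of sinks. -/
def sinks : Set V := {v | ∀ e, Λ.src e ≠ v}

/-- The filter in `E(S)` associated with a pair (word, complete family). -/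
def pairFilter (_Λ : LblSp V Ed A) (α : Word A) (F : ℕ → Set (Set V)) : Set (Tr V A) :=
  {t | ∃ (n : ℕ) (B : Set V), (n : ℕ∞) ≤ wlength α ∧ B ∈ F n ∧
    t = Tr.mk (wprefix α n) B (wprefix α n)}

/-- A complete family for the word `α`: `F n` is a filter in `𝒜^{α_{1,n}}` for
`1 ≤ n ≤ |α|` (`F 0` is a filter in `𝒜` or empty, and a filter if `α = ω`), and
`F n = {X ∈ 𝒜^{α_{1,n}} : r(X, α_{n+1}) ∈ F (n+1)}` for all `n < |α|`. -/
noncomputable def IsCompleteFamily (α : Word A) (F : ℕ → Set (Set V)) : Prop :=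
  Λ.IsWordW α ∧
  (∀ n : ℕ, 1 ≤ n → (n : ℕ∞) ≤ wlength α → Λ.IsFilterAset (wprefix α n) (F n)) ∧
  (F 0 = ∅ ∨ Λ.IsFilterAset [] (F 0)) ∧
  (wlength α = 0 → Λ.IsFilterAset [] (F 0)) ∧
  (∀ n : ℕ, ((n + 1 : ℕ) : ℕ∞) ≤ wlength α →
    F n = {X | X ∈ Λ.Aset (wprefix α n) ∧
      Λ.relRange X ((wprefix α (n + 1)).drop n) ∈ F (n + 1)})

/-! ## The tight filter space `T` and the groupoid `Γ` as types -/

/-- The space `T` of tight filters. -/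
structure TightT where
  carrier : Set (Tr V A)
  tight : Λ.IsTightFilter carrier

/-- The topology of `T`, induced from pointwise convergence of characters. -/
noncomputable instance : TopologicalSpace Λ.TightT :=
  TopologicalSpace.induced (fun ξ => Λ.charOf ξ.carrier) inferInstance

/-- The groupoid `Γ ⊆ T × ℤ × T` as a type. -/
structure GammaT where
  fst : Λ.TightT
  mid : ℤ
  lst : Λ.TightT
  mem : Λ.InGamma fst.carrier mid lst.carrier

/-- The raw triple underlying an element of `Γ`. -/
def rawOf (p : Λ.GammaT) : Set (Tr V A) × ℤ × Set (Tr V A) :=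
  (p.fst.carrier, p.mid, p.lst.carrier)

/-- The collection of all sets `Z_{s,e:e₁,…,eₙ}` (for `s ∈ S`, `e, eᵢ ∈ E(S)`),
as subsets of `Γ`. -/
noncomputable def ZBasisT : Set (Set Λ.GammaT) :=
  {Z | ∃ (μ : List A) (X : Set V) (ν : List A) (e : Tr V A) (es : List (Tr V A)),
    Tr.mk μ X ν ∈ Λ.SSet ∧ e ∈ Λ.ESet ∧ (∀ f ∈ es, f ∈ Λ.ESet) ∧
    Z = {p : Λ.GammaT | Λ.rawOf p ∈ Λ.ZrawGen μ ν e es}}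

/-- The topology on `Γ` induced by the isomorphism `Φ` from the germ topology of
`𝒢_tight`, generated by the images of the basic sets `Θ(s, 𝒰)` with `𝒰 ⊆ D_{s*s}`
open in the tight spectrum. -/
noncomputable def PhiTopology : TopologicalSpace Λ.GammaT :=
  TopologicalSpace.generateFrom
    {Z | ∃ (s : Tr V A) (U : Set (Tr V A → Bool)), s ∈ Λ.SSet ∧
      (∃ W, IsOpen W ∧ U = W ∩ Λ.tightSpectrum) ∧
      (∀ φ ∈ U, φ (Λ.tmul (Tr.tstar s) s) = true) ∧
      Z = {p : Λ.GammaT | ∃ φ ∈ U, (s, φ) ∈ Λ.Omega ∧ Λ.PhiRaw s φ = Λ.rawOf p}}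

end LblSp

section Words

variable {A : Type w}

lemma List.not_append_prefix_self {l t : List A} (ht : t ≠ []) : ¬ l ++ t <+: l := by
  intro h
  exact ht (List.prefix_nil.mp ((List.prefix_append_right_inj l).mp (by simpa using h)))

lemma wprefix_nil (w : Word A) : WPrefix [] w := by
  cases w with
  | inl l => exact List.nil_prefix
  | inr f => exact List.ofFn_zero.symm

lemma wprefix_inr_iff {ε : List A} {f : ℕ → A} :
    WPrefix ε (Sum.inr f : Word A) ↔ ∀ (i : ℕ) (h : i < ε.length), ε[i] = f i := by
  refine ⟨fun h i hi => ?_, fun h => List.ext_getElem (by simp) fun i h₁ _ => ?_⟩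
  · simpa using List.getElem_of_eq h hi
  · simpa using h i h₁

lemma wappend_inr (β : List A) (f : ℕ → A) :
    wappend β (Sum.inr f : Word A) =
      Sum.inr fun n => if h : n < β.length then β[n] else f (n - β.length) := rfl

lemma wprefix_wappend_iff {ε β : List A} {γ : Word A} :
    WPrefix ε (wappend β γ) ↔ ε <+: β ∨ ∃ δ, ε = β ++ δ ∧ WPrefix δ γ := by
  cases γ with
  | inl l =>
    change ε <+: β ++ l ↔ _
    constructor
    · intro h
      by_cases hle : ε.length ≤ β.length
      · exact Or.inl (List.prefix_of_prefix_length_le h (List.prefix_append β l) hle)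
      · obtain ⟨δ, rfl⟩ :=
          List.prefix_of_prefix_length_le (List.prefix_append β l) h (by omega)
        exact Or.inr ⟨δ, rfl, (List.prefix_append_right_inj β).mp h⟩
    · rintro (h | ⟨δ, rfl, h⟩)
      · exact List.prefix_append_of_prefix h
      · exact (List.prefix_append_right_inj β).mpr h
  | inr f =>
    rw [wappend_inr, wprefix_inr_iff, List.prefix_iff_getElem]
    constructor
    · intro h
      by_cases hle : ε.length ≤ β.length
      · exact Or.inl ⟨hle, fun i hi => by simpa [show i < β.length by omega] using h i hi⟩
      · refine Or.inr ⟨ε.drop β.length, ?_, wprefix_inr_iff.mpr fun i hi => ?_⟩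
        · refine (List.prefix_iff_eq_append.mp ?_).symm
          exact List.prefix_iff_getElem.mpr ⟨by omega, fun i hi => by
            simpa [hi] using (h i (by omega)).symm⟩
        · simpa using h (β.length + i) (by simp at hi; omega)
    · rintro (⟨hle, h⟩ | ⟨δ, rfl, h⟩) i hi
      · simpa [show i < β.length by omega] using h i hi
      · rw [List.getElem_append]
        split_ifs with hiβ
        · rfl
        · exact (wprefix_inr_iff.mp h) _ _

lemma wprefix_append_wappend_iff {β δ : List A} {γ : Word A} :
    WPrefix (β ++ δ) (wappend β γ) ↔ WPrefix δ γ := by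
  rw [wprefix_wappend_iff]
  refine ⟨?_, fun h => Or.inr ⟨δ, rfl, h⟩⟩
  rintro (h | ⟨δ', h, hδ'⟩)
  · obtain rfl : δ = [] := by_contra fun hδ => List.not_append_prefix_self hδ h
    exact wprefix_nil γ
  · rwa [List.append_cancel_left h]

lemma exists_eq_wappend_of_wprefix {α : List A} {w : Word A} (h : WPrefix α w) :
    ∃ γ, w = wappend α γ := by
  cases w with
  | inl l =>
    obtain ⟨t, rfl⟩ := h
    exact ⟨Sum.inl t, rfl⟩
  | inr f =>
    refine ⟨Sum.inr fun n => f (n + α.length), ?_⟩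
    rw [wappend_inr]
    congr 1
    funext n
    split_ifs with hn
    · exact (wprefix_inr_iff.mp h n hn).symm
    · rw [Nat.sub_add_cancel (by omega)]

end Words

namespace LblSp

variable {V : Type u} {Ed : Type v} {A : Type w} (Λ : LblSp V Ed A)

section Ranges

@[simp] lemma relRange_nil (X : Set V) : Λ.relRange X [] = X := if_pos rfl

@[simp] lemma rangeL_nil : Λ.rangeL ([] : List A) = Set.univ := Λ.relRange_nil _

lemma mem_relRange {X : Set V} {a : List A} (ha : a ≠ []) {v : V} :
    v ∈ Λ.relRange X a ↔ ∃ (l : List Ed) (h : l ≠ []),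
      l.IsChain (fun e f => Λ.rng e = Λ.src f) ∧ l.map Λ.lab = a ∧
      Λ.src (l.head h) ∈ X ∧ Λ.rng (l.getLast h) = v := by
  rw [relRange, if_neg ha]; rfl

lemma relRange_mono {X Y : Set V} (h : X ⊆ Y) (a : List A) :
    Λ.relRange X a ⊆ Λ.relRange Y a := by
  rcases eq_or_ne a [] with rfl | ha
  · simpa using h
  · simp only [Set.subset_def, Λ.mem_relRange ha]
    rintro v ⟨l, hl, hc, hm, hs, hr⟩
    exact ⟨l, hl, hc, hm, h hs, hr⟩

lemma nonempty_of_relRange_nonempty {X : Set V} {a : List A}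
    (h : (Λ.relRange X a).Nonempty) : X.Nonempty := by
  rcases eq_or_ne a [] with rfl | ha
  · simpa using h
  · obtain ⟨v, hv⟩ := h
    obtain ⟨l, hl, -, -, hs, -⟩ := (Λ.mem_relRange ha).mp hv
    exact ⟨_, hs⟩

lemma relRange_relRange_subset {X : Set V} {a b : List A} (ha : a ≠ []) (hb : b ≠ []) :
    Λ.relRange (Λ.relRange X a) b ⊆ Λ.relRange X (a ++ b) := by
  intro v hv
  obtain ⟨l₂, hl₂, hc₂, hm₂, hs₂, rfl⟩ := (Λ.mem_relRange hb).mp hv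
  obtain ⟨l₁, hl₁, hc₁, hm₁, hs₁, hr₁⟩ := (Λ.mem_relRange ha).mp hs₂
  refine (Λ.mem_relRange (by simp [ha])).mpr
    ⟨l₁ ++ l₂, by simp [hl₁], hc₁.append hc₂ ?_, by simp [hm₁, hm₂], ?_, ?_⟩
  · simp [List.getLast?_eq_some_getLast hl₁, List.head?_eq_some_head hl₂, hr₁]
  · rwa [List.head_append_of_ne_nil hl₁]
  · rw [List.getLast_append_of_ne_nil _ hl₂]

lemma relRange_append_subset {X : Set V} {a b : List A} (ha : a ≠ []) (hb : b ≠ []) :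
    Λ.relRange X (a ++ b) ⊆ Λ.relRange (Λ.relRange X a) b := by
  intro v hv
  obtain ⟨l, hl, hc, hm, hs, rfl⟩ := (Λ.mem_relRange (by simp [ha])).mp hv
  obtain ⟨l₁, l₂, rfl, hm₁, hm₂⟩ := List.map_eq_append_iff.mp hm
  have hl₁ : l₁ ≠ [] := by rintro rfl; exact ha hm₁.symm
  have hl₂ : l₂ ≠ [] := by rintro rfl; exact hb hm₂.symm
  refine (Λ.mem_relRange hb).mpr ⟨l₂, hl₂, hc.right_of_append, hm₂, ?_, ?_⟩
  · exact (Λ.mem_relRange ha).mpr ⟨l₁, hl₁, hc.left_of_append, hm₁,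
      by rwa [List.head_append_of_ne_nil hl₁] at hs, hc.rel_getLast_head_of_append hl₁ hl₂⟩
  · rw [List.getLast_append_of_ne_nil _ hl₂]

lemma relRange_relRange (X : Set V) (a b : List A) :
    Λ.relRange (Λ.relRange X a) b = Λ.relRange X (a ++ b) := by
  rcases eq_or_ne a [] with rfl | ha
  · simp
  rcases eq_or_ne b [] with rfl | hb
  · simp
  exact (Λ.relRange_relRange_subset ha hb).antisymm (Λ.relRange_append_subset ha hb)

lemma relRange_rangeL (a b : List A) : Λ.relRange (Λ.rangeL a) b = Λ.rangeL (a ++ b) :=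
  Λ.relRange_relRange Set.univ a b

lemma rangeL_append_subset (a b : List A) : Λ.rangeL (a ++ b) ⊆ Λ.rangeL b := by
  rw [← Λ.relRange_rangeL]
  exact Λ.relRange_mono (Set.subset_univ _) b

lemma mem_LStar_of_rangeL_nonempty {u : List A} (h : (Λ.rangeL u).Nonempty) :
    u ∈ Λ.LStar := by
  rcases eq_or_ne u [] with rfl | hu
  · exact Or.inl rfl
  · obtain ⟨v, hv⟩ := h
    obtain ⟨l, hl, hc, hm, -⟩ := (Λ.mem_relRange hu).mp hv
    exact Or.inr ⟨l, hl, hc, hm⟩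

lemma mem_LStar_of_rangeL_append_nonempty {x y : List A}
    (h : (Λ.rangeL (x ++ y)).Nonempty) : x ∈ Λ.LStar ∧ y ∈ Λ.LStar :=
  ⟨Λ.mem_LStar_of_rangeL_nonempty
      (Λ.nonempty_of_relRange_nonempty (by rwa [Λ.relRange_rangeL])),
    Λ.mem_LStar_of_rangeL_nonempty (h.mono (Λ.rangeL_append_subset x y))⟩

lemma inter_rangeL_mem (hL : Λ.IsLS) {C : Set V} (hC : C ∈ Λ.𝒜) {v : List A}
    (hv : v ∈ Λ.LStar) : C ∩ Λ.rangeL v ∈ Λ.𝒜 := by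
  rcases eq_or_ne v [] with rfl | hv'
  · simpa using hC
  · exact hL.inter_mem C hC _ (hL.range_mem v hv hv')

lemma subset_relRange_inter_rangeL (hW : Λ.IsWLR) {C D : Set V} (hC : C ∈ Λ.𝒜)
    {v t : List A} (ht : t ∈ Λ.LStar) (hv : v ∈ Λ.LStar) (hDC : D ⊆ Λ.relRange C t)
    (hDv : D ⊆ Λ.rangeL (v ++ t)) : D ⊆ Λ.relRange (C ∩ Λ.rangeL v) t := by
  rcases eq_or_ne v [] with rfl | hv'
  · simpa using hDC
  rcases eq_or_ne t [] with rfl | ht'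
  · simp only [List.append_nil, relRange_nil] at hDC hDv ⊢
    exact Set.subset_inter hDC hDv
  rw [hW.wlr C hC _ (hW.toIsLS.range_mem v hv hv') t ht ht', Λ.relRange_rangeL]
  exact Set.subset_inter hDC hDv

end Ranges

section Semigroup

lemma tmul_mk_mk (α β γ δ : List A) (X Y : Set V) :
    Λ.tmul (Tr.mk α X β) (Tr.mk γ Y δ) =
      if β <+: γ ∧ (Λ.relRange X (γ.drop β.length) ∩ Y).Nonempty then
        Tr.mk (α ++ γ.drop β.length) (Λ.relRange X (γ.drop β.length) ∩ Y) δ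
      else if γ <+: β ∧ (X ∩ Λ.relRange Y (β.drop γ.length)).Nonempty then
        Tr.mk α (X ∩ Λ.relRange Y (β.drop γ.length)) (δ ++ β.drop γ.length)
      else Tr.zero := rfl

lemma tmul_mk_mk_of_eq {α β γ : List A} {X Y : Set V} (h : (X ∩ Y).Nonempty) :
    Λ.tmul (Tr.mk α X β) (Tr.mk β Y γ) = Tr.mk α (X ∩ Y) γ := by
  simp [tmul_mk_mk, h]

lemma tmul_mk_mk_append (δ t : List A) (B B' : Set V) :
    Λ.tmul (Tr.mk δ B δ) (Tr.mk (δ ++ t) B' (δ ++ t)) =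
      if (Λ.relRange B t ∩ B').Nonempty then
        Tr.mk (δ ++ t) (Λ.relRange B t ∩ B') (δ ++ t)
      else Tr.zero := by
  rcases eq_or_ne t [] with rfl | ht
  · simp [tmul_mk_mk]
  · simp [tmul_mk_mk, List.not_append_prefix_self ht]

lemma tmul_mk_append_mk (δ t : List A) (B B' : Set V) :
    Λ.tmul (Tr.mk (δ ++ t) B' (δ ++ t)) (Tr.mk δ B δ) =
      if (B' ∩ Λ.relRange B t).Nonempty then
        Tr.mk (δ ++ t) (B' ∩ Λ.relRange B t) (δ ++ t)
      else Tr.zero := by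
  rcases eq_or_ne t [] with rfl | ht
  · simp [tmul_mk_mk]
  · simp [tmul_mk_mk, List.not_append_prefix_self ht]

lemma exists_append_of_tmul_mk_eq {δ ε : List A} {B C : Set V}
    (h : Λ.tmul (Tr.mk δ B δ) (Tr.mk ε C ε) = Tr.mk δ B δ) :
    ∃ t, δ = ε ++ t ∧ B ⊆ Λ.relRange C t := by
  rw [tmul_mk_mk] at h
  split_ifs at h with h₁ h₂
  · obtain ⟨-, hB, hε⟩ := Tr.mk.inj h
    subst hε
    refine ⟨[], by simp, ?_⟩
    rw [← hB]
    simp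
  · obtain ⟨-, hB, -⟩ := Tr.mk.inj h
    exact ⟨δ.drop ε.length, (List.prefix_iff_eq_append.mp h₂.1).symm,
      hB ▸ Set.inter_subset_right⟩

lemma mk_mem_ESet_iff {u : List A} {C : Set V} :
    Tr.mk u C u ∈ Λ.ESet ↔ u ∈ Λ.LStar ∧ C ∈ Λ.Aset u ∧ C.Nonempty := by
  simp [ESet]

lemma mk_mem_SSet_iff {α β : List A} {X : Set V} :
    Tr.mk α X β ∈ Λ.SSet ↔
      α ∈ Λ.LStar ∧ β ∈ Λ.LStar ∧ X ∈ Λ.Aset α ∧ X ∈ Λ.Aset β ∧ X.Nonempty := by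
  simp [SSet]

end Semigroup

section Filters

variable {Λ} {ξ : Set (Tr V A)}

lemma IsFilterES.tmul_mem (hξ : Λ.IsFilterES ξ) {p q : Tr V A} (hp : p ∈ ξ) (hq : q ∈ ξ) :
    Λ.tmul p q ∈ ξ :=
  hξ.2.2.1 p hp q hq

lemma IsFilterES.zero_notMem (hξ : Λ.IsFilterES ξ) : Tr.zero ∉ ξ :=
  fun h => (hξ.2.1 _ h).2 rfl

lemma IsFilterES.mem_of_tmul_eq (hξ : Λ.IsFilterES ξ) {p q : Tr V A} (hp : p ∈ ξ)
    (hq : q ∈ Λ.ESet) (h : Λ.tmul p q = p) : q ∈ ξ :=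
  hξ.2.2.2 p hp q hq h

lemma IsFilterES.exists_eq_mk (hξ : Λ.IsFilterES ξ) {t : Tr V A} (ht : t ∈ ξ) :
    ∃ u C, t = Tr.mk u C u ∧ u ∈ Λ.LStar ∧ C ∈ Λ.Aset u ∧ C.Nonempty := by
  obtain ⟨h | ⟨u, C, rfl, h⟩, hne⟩ := hξ.2.1 t ht
  · exact absurd h hne
  · exact ⟨u, C, rfl, h⟩

lemma IsFilterES.of_mk_mem (hξ : Λ.IsFilterES ξ) {u : List A} {C : Set V}
    (h : Tr.mk u C u ∈ ξ) : u ∈ Λ.LStar ∧ C ∈ Λ.Aset u ∧ C.Nonempty :=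
  Λ.mk_mem_ESet_iff.mp (hξ.2.1 _ h).1

lemma IsFilterES.prefix_or_prefix (hξ : Λ.IsFilterES ξ) {u v : List A} {Y Z : Set V}
    (hu : Tr.mk u Y u ∈ ξ) (hv : Tr.mk v Z v ∈ ξ) : u <+: v ∨ v <+: u := by
  by_contra! h
  have := hξ.tmul_mem hu hv
  simp [tmul_mk_mk, h.1, h.2, hξ.zero_notMem] at this

lemma IsFilterES.mk_relRange_inter_mem (hξ : Λ.IsFilterES ξ) {u t : List A} {D D' : Set V}
    (hD : Tr.mk u D u ∈ ξ) (hD' : Tr.mk (u ++ t) D' (u ++ t) ∈ ξ) :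
    Tr.mk (u ++ t) (Λ.relRange D t ∩ D') (u ++ t) ∈ ξ := by
  have h := hξ.tmul_mem hD hD'
  rw [tmul_mk_mk_append] at h
  split_ifs at h
  · exact h
  · exact absurd h hξ.zero_notMem

lemma IsFilterES.mk_mem_of_subset (hξ : Λ.IsFilterES ξ) {u : List A} {D C : Set V}
    (hD : Tr.mk u D u ∈ ξ) (hDC : D ⊆ C) (hC : C ∈ Λ.Aset u) : Tr.mk u C u ∈ ξ := by
  obtain ⟨hu, -, hDne⟩ := hξ.of_mk_mem hD
  refine hξ.mem_of_tmul_eq hD (Λ.mk_mem_ESet_iff.mpr ⟨hu, hC, hDne.mono hDC⟩) ?_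
  rw [tmul_mk_mk_of_eq, Set.inter_eq_left.mpr hDC]
  rwa [Set.inter_eq_left.mpr hDC]

lemma IsFilterES.mk_inter_rangeL_mem (hW : Λ.IsWLR) (hξ : Λ.IsFilterES ξ) {v t : List A}
    {C D : Set V} (hD : Tr.mk (v ++ t) D (v ++ t) ∈ ξ) (hC : C ∈ Λ.𝒜)
    (hDC : D ⊆ Λ.relRange C t) : Tr.mk v (C ∩ Λ.rangeL v) v ∈ ξ := by
  obtain ⟨-, hDA, hDne⟩ := hξ.of_mk_mem hD
  obtain ⟨hv, ht⟩ := Λ.mem_LStar_of_rangeL_append_nonempty (hDne.mono hDA.2)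
  have hD' := Λ.subset_relRange_inter_rangeL hW hC ht hv hDC hDA.2
  refine hξ.mem_of_tmul_eq hD (Λ.mk_mem_ESet_iff.mpr ⟨hv,
    ⟨Λ.inter_rangeL_mem hW.toIsLS hC hv, Set.inter_subset_right⟩,
    Λ.nonempty_of_relRange_nonempty (hDne.mono hD')⟩) ?_
  rw [tmul_mk_append_mk, Set.inter_eq_left.mpr hD', if_pos hDne]

lemma IsFilterES.exists_mk_mem_of_prefix (hW : Λ.IsWLR) (hξ : Λ.IsFilterES ξ)
    {u v : List A} {D : Set V} (hD : Tr.mk u D u ∈ ξ) (hv : v <+: u) (hv' : v ≠ []) :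
    ∃ B, Tr.mk v B v ∈ ξ := by
  obtain ⟨t, rfl⟩ := hv
  obtain ⟨-, hDA, hDne⟩ := hξ.of_mk_mem hD
  have hvL := (Λ.mem_LStar_of_rangeL_append_nonempty (hDne.mono hDA.2)).1
  refine ⟨_, hξ.mk_inter_rangeL_mem hW hD (hW.toIsLS.range_mem v hvL hv') ?_⟩
  rw [Λ.relRange_rangeL]
  exact hDA.2

end Filters

section Cutting

variable {Λ}

@[simp] lemma Hcut_nil (ξ : Set (Tr V A)) : Λ.Hcut [] ξ = ξ := if_pos rfl

lemma mem_Hcut_iff {a : List A} (ha : a ≠ []) {ξ : Set (Tr V A)} {t : Tr V A} :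
    t ∈ Λ.Hcut a ξ ↔ ∃ δ B, t = Tr.mk δ B δ ∧ B ∈ Λ.Aset δ ∧
      ∃ D, Tr.mk (a ++ δ) D (a ++ δ) ∈ ξ ∧ D ⊆ B := by
  rw [Hcut, if_neg ha]; rfl

lemma mk_mem_Hcut_iff {a : List A} (ha : a ≠ []) {ξ : Set (Tr V A)} {δ : List A}
    {B : Set V} : Tr.mk δ B δ ∈ Λ.Hcut a ξ ↔
      B ∈ Λ.Aset δ ∧ ∃ D, Tr.mk (a ++ δ) D (a ++ δ) ∈ ξ ∧ D ⊆ B := by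
  simp [mem_Hcut_iff ha]

lemma mk_mem_Hcut_of_mk_append_mem {a δ : List A} {ξ : Set (Tr V A)} {C : Set V}
    (hC : C ∈ Λ.Aset δ) (h : Tr.mk (a ++ δ) C (a ++ δ) ∈ ξ) : Tr.mk δ C δ ∈ Λ.Hcut a ξ := by
  rcases eq_or_ne a [] with rfl | ha
  · simpa using h
  · exact (mk_mem_Hcut_iff ha).mpr ⟨hC, C, h, subset_rfl⟩

lemma IsFilterES.mk_append_mem_of_mk_mem_Hcut {a δ : List A} {ξ : Set (Tr V A)}
    (hξ : Λ.IsFilterES ξ) {C : Set V} (hC : C ∈ Λ.Aset (a ++ δ))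
    (h : Tr.mk δ C δ ∈ Λ.Hcut a ξ) : Tr.mk (a ++ δ) C (a ++ δ) ∈ ξ := by
  rcases eq_or_ne a [] with rfl | ha
  · simpa using h
  · obtain ⟨-, D, hD, hDC⟩ := (mk_mem_Hcut_iff ha).mp h
    exact hξ.mk_mem_of_subset hD hDC hC

lemma IsFilterES.mk_append_mem_of_Hcut_eq {η ξ : Set (Tr V A)} (hη : Λ.IsFilterES η)
    {α β δ : List A} (hH : Λ.Hcut α η = Λ.Hcut β ξ) {C : Set V} (hC : C ∈ Λ.Aset (α ++ δ))
    (h : Tr.mk (β ++ δ) C (β ++ δ) ∈ ξ) : Tr.mk (α ++ δ) C (α ++ δ) ∈ η :=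
  hη.mk_append_mem_of_mk_mem_Hcut hC <| hH ▸
    mk_mem_Hcut_of_mk_append_mem ⟨hC.1, hC.2.trans (Λ.rangeL_append_subset α δ)⟩ h

variable {ξ : Set (Tr V A)} {a : List A}

lemma IsFilterES.nonempty_of_mk_mem_Hcut (hξ : Λ.IsFilterES ξ) (ha : a ≠ []) {δ : List A}
    {B : Set V} (h : Tr.mk δ B δ ∈ Λ.Hcut a ξ) : B.Nonempty := by
  obtain ⟨-, D, hD, hDB⟩ := (mk_mem_Hcut_iff ha).mp h
  exact (hξ.of_mk_mem hD).2.2.mono hDB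

lemma IsFilterES.mk_relRange_inter_mem_Hcut (hL : Λ.IsLS) (hξ : Λ.IsFilterES ξ)
    (ha : a ≠ []) {δ t : List A} {B B' : Set V} (hB : Tr.mk δ B δ ∈ Λ.Hcut a ξ)
    (hB' : Tr.mk (δ ++ t) B' (δ ++ t) ∈ Λ.Hcut a ξ) :
    Tr.mk (δ ++ t) (Λ.relRange B t ∩ B') (δ ++ t) ∈ Λ.Hcut a ξ := by
  obtain ⟨hBA, D, hD, hDB⟩ := (mk_mem_Hcut_iff ha).mp hB
  obtain ⟨hB'A, D', hD', hD'B'⟩ := (mk_mem_Hcut_iff ha).mp hB'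
  rw [← List.append_assoc] at hD'
  have hE := hξ.mk_relRange_inter_mem hD hD'
  obtain ⟨-, hEA, hEne⟩ := hξ.of_mk_mem hE
  have ht := (Λ.mem_LStar_of_rangeL_append_nonempty (hEne.mono hEA.2)).2
  rw [mk_mem_Hcut_iff ha, ← List.append_assoc]
  exact ⟨⟨hL.inter_mem _ (hL.relRange_mem B hBA.1 t ht) _ hB'A.1,
    Set.inter_subset_right.trans hB'A.2⟩, _, hE,
    Set.inter_subset_inter (Λ.relRange_mono hDB t) hD'B'⟩

lemma IsFilterES.tmul_mem_Hcut (hL : Λ.IsLS) (hξ : Λ.IsFilterES ξ) (ha : a ≠ [])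
    {p q : Tr V A} (hp : p ∈ Λ.Hcut a ξ) (hq : q ∈ Λ.Hcut a ξ) : Λ.tmul p q ∈ Λ.Hcut a ξ := by
  obtain ⟨δ, B, rfl, -, D, hD, -⟩ := (mem_Hcut_iff ha).mp hp
  obtain ⟨δ', B', rfl, -, D', hD', -⟩ := (mem_Hcut_iff ha).mp hq
  rcases hξ.prefix_or_prefix hD hD' with h | h
  · obtain ⟨t, rfl⟩ := (List.prefix_append_right_inj a).mp h
    have h := hξ.mk_relRange_inter_mem_Hcut hL ha hp hq
    rwa [tmul_mk_mk_append, if_pos (hξ.nonempty_of_mk_mem_Hcut ha h)]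
  · obtain ⟨t, rfl⟩ := (List.prefix_append_right_inj a).mp h
    have h := hξ.mk_relRange_inter_mem_Hcut hL ha hq hp
    rw [Set.inter_comm] at h
    rwa [tmul_mk_append_mk, if_pos (hξ.nonempty_of_mk_mem_Hcut ha h)]

lemma IsFilterES.mem_Hcut_of_tmul_eq (hW : Λ.IsWLR) (hξ : Λ.IsFilterES ξ) (ha : a ≠ [])
    {p q : Tr V A} (hp : p ∈ Λ.Hcut a ξ) (hq : q ∈ Λ.ESet) (h : Λ.tmul p q = p) :
    q ∈ Λ.Hcut a ξ := by
  obtain ⟨δ, B, rfl, -, D, hD, hDB⟩ := (mem_Hcut_iff ha).mp hp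
  obtain rfl | ⟨ε, C, rfl, -, hC, -⟩ := hq
  · exact absurd h (by simp [tmul])
  obtain ⟨t, rfl, hBC⟩ := Λ.exists_append_of_tmul_mk_eq h
  rw [← List.append_assoc] at hD
  exact (mk_mem_Hcut_iff ha).mpr
    ⟨hC, _, hξ.mk_inter_rangeL_mem hW hD hC.1 (hDB.trans hBC), Set.inter_subset_left⟩

lemma IsFilterES.Hcut (hW : Λ.IsWLR) (hξ : Λ.IsFilterES ξ) (ha : a ≠ []) {Y : Set V}
    (hY : Tr.mk a Y a ∈ ξ) : Λ.IsFilterES (Λ.Hcut a ξ) := by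
  obtain ⟨-, hYA, -⟩ := hξ.of_mk_mem hY
  refine ⟨⟨Tr.mk [] Y [], mk_mem_Hcut_of_mk_append_mem ⟨hYA.1, by simp⟩ (by simpa using hY)⟩,
    fun t ht => ?_, fun _ hp _ hq => hξ.tmul_mem_Hcut hW.toIsLS ha hp hq,
    fun _ hp _ hq h => hξ.mem_Hcut_of_tmul_eq hW ha hp hq h⟩
  obtain ⟨δ, B, rfl, hBA, D, hD, hDB⟩ := (mem_Hcut_iff ha).mp ht
  obtain ⟨-, hDA, hDne⟩ := hξ.of_mk_mem hD
  exact ⟨Λ.mk_mem_ESet_iff.mpr ⟨(Λ.mem_LStar_of_rangeL_append_nonempty (hDne.mono hDA.2)).2,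
    hBA, hDne.mono hDB⟩, nofun⟩

lemma IsFilterES.Hcut_Hcut (hL : Λ.IsLS) (hξ : Λ.IsFilterES ξ) (a b : List A) :
    Λ.Hcut b (Λ.Hcut a ξ) = Λ.Hcut (a ++ b) ξ := by
  rcases eq_or_ne a [] with rfl | ha
  · simp
  rcases eq_or_ne b [] with rfl | hb
  · simp
  ext t
  rw [mem_Hcut_iff hb, mem_Hcut_iff (by simp [ha])]
  constructor
  · rintro ⟨δ, B, rfl, hB, D, hD, hDB⟩
    obtain ⟨-, D₁, hD₁, hD₁D⟩ := (mk_mem_Hcut_iff ha).mp hD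
    exact ⟨δ, B, rfl, hB, D₁, by rwa [List.append_assoc], hD₁D.trans hDB⟩
  · rintro ⟨δ, B, rfl, hB, D, hD, hDB⟩
    rw [List.append_assoc] at hD
    obtain ⟨-, hDA, hDne⟩ := hξ.of_mk_mem hD
    have hbδ := (Λ.mem_LStar_of_rangeL_append_nonempty (hDne.mono hDA.2)).2
    refine ⟨δ, B, rfl, hB, Λ.rangeL (b ++ δ) ∩ B, ?_, Set.inter_subset_right⟩
    exact (mk_mem_Hcut_iff ha).mpr ⟨⟨hL.inter_mem _ (hL.range_mem _ hbδ (by simp [hb])) _ hB.1,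
      Set.inter_subset_left⟩, D, hD,
      Set.subset_inter (hDA.2.trans (Λ.rangeL_append_subset a _)) hDB⟩

lemma IsFilterES.sigmaMap_eq_Hcut (hξ : Λ.IsFilterES ξ) {c : A} {Y : Set V}
    (hY : Tr.mk [c] Y [c] ∈ ξ) : Λ.sigmaMap ξ = Λ.Hcut [c] ξ := by
  have h : ∃ a B, Tr.mk [a] B [a] ∈ ξ := ⟨c, Y, hY⟩
  obtain ⟨B, hB⟩ := h.choose_spec
  -- one-letter words occurring in a filter are comparable, hence equal
  have hc : h.choose = c :=
    (by simpa using hξ.prefix_or_prefix hB hY : _ ∨ _).elim id Eq.symm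
  rw [sigmaMap, dif_pos h, hc]

lemma IsFilterES.sigmaMap_iterate_eq_Hcut (hW : Λ.IsWLR) (hξ : Λ.IsFilterES ξ) {α : List A}
    {Y : Set V} (hY : Tr.mk α Y α ∈ ξ) : Λ.sigmaMap^[α.length] ξ = Λ.Hcut α ξ := by
  induction α generalizing ξ Y with
  | nil => simp
  | cons c α ih =>
    obtain ⟨B, hB⟩ := hξ.exists_mk_mem_of_prefix hW hY (List.prefix_append [c] α) (by simp)
    have hY' : Tr.mk α Y α ∈ Λ.Hcut [c] ξ :=
      mk_mem_Hcut_of_mk_append_mem ⟨(hξ.of_mk_mem hY).2.1.1,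
        (hξ.of_mk_mem hY).2.1.2.trans (Λ.rangeL_append_subset [c] α)⟩ hY
    rw [List.length_cons, Function.iterate_succ_apply, hξ.sigmaMap_eq_Hcut hB,
      ih (hξ.Hcut hW (by simp) hB) hY', hξ.Hcut_Hcut hW.toIsLS]
    rfl

end Cutting

section Injectivity

variable {Λ} {ξ ξ' : Set (Tr V A)} {α : List A} {X : Set V}

lemma IsFilterES.subset_of_Hcut_eq (hW : Λ.IsWLR) (hξ : Λ.IsFilterES ξ)
    (hξ' : Λ.IsFilterES ξ') (hX : Tr.mk α X α ∈ ξ) (hH : Λ.Hcut α ξ = Λ.Hcut α ξ') :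
    ξ ⊆ ξ' := by
  intro t ht
  obtain ⟨u, C, rfl, -, hCA, -⟩ := hξ.exists_eq_mk ht
  rcases hξ.prefix_or_prefix ht hX with ⟨t₀, rfl⟩ | ⟨t₀, rfl⟩
  · have hE := hξ.mk_relRange_inter_mem ht hX
    obtain ⟨-, hEA, -⟩ := hξ.of_mk_mem hE
    have hE' : Tr.mk (u ++ t₀) (Λ.relRange C t₀ ∩ X) (u ++ t₀) ∈ ξ' := by
      simpa using hξ'.mk_append_mem_of_Hcut_eq hH.symm (δ := [])
        (by simpa using hEA) (by simpa using hE)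
    simpa [Set.inter_eq_left.mpr hCA.2] using
      hξ'.mk_inter_rangeL_mem hW hE' hCA.1 Set.inter_subset_left
  · exact hξ'.mk_append_mem_of_Hcut_eq hH.symm hCA ht

lemma IsFilterES.eq_of_Hcut_eq (hW : Λ.IsWLR) (hξ : Λ.IsFilterES ξ)
    (hξ' : Λ.IsFilterES ξ') (hX : Tr.mk α X α ∈ ξ) (hX' : Tr.mk α X α ∈ ξ')
    (hH : Λ.Hcut α ξ = Λ.Hcut α ξ') : ξ = ξ' :=
  (hξ.subset_of_Hcut_eq hW hξ' hX hH).antisymm (hξ'.subset_of_Hcut_eq hW hξ hX' hH.symm)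

lemma injOn_sigmaMap_iterate (hW : Λ.IsWLR) (α : List A) (X : Set V) :
    Set.InjOn Λ.sigmaMap^[α.length] {ξ | Λ.IsFilterES ξ ∧ Tr.mk α X α ∈ ξ} := by
  rintro ξ ⟨hξ, hX⟩ ξ' ⟨hξ', hX'⟩ h
  rw [hξ.sigmaMap_iterate_eq_Hcut hW hX, hξ'.sigmaMap_iterate_eq_Hcut hW hX'] at h
  exact hξ.eq_of_Hcut_eq hW hξ' hX hX' h

end Injectivity

section Tails

variable {Λ} {ξ η : Set (Tr V A)}

lemma IsFilterES.exists_mk_mem_Hcut_iff (hξ : Λ.IsFilterES ξ) (β δ : List A) :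
    (∃ B, Tr.mk δ B δ ∈ Λ.Hcut β ξ) ↔ ∃ D, Tr.mk (β ++ δ) D (β ++ δ) ∈ ξ := by
  refine ⟨fun ⟨B, hB⟩ => ?_, fun ⟨D, hD⟩ => ?_⟩
  · rcases eq_or_ne β [] with rfl | hβ
    · exact ⟨B, by simpa using hB⟩
    · obtain ⟨-, D, hD, -⟩ := (mk_mem_Hcut_iff hβ).mp hB
      exact ⟨D, hD⟩
  · obtain ⟨-, hDA, -⟩ := hξ.of_mk_mem hD
    exact ⟨D, mk_mem_Hcut_of_mk_append_mem
      ⟨hDA.1, hDA.2.trans (Λ.rangeL_append_subset β δ)⟩ hD⟩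

lemma HasWord.wprefix_of_mk_mem {w : Word A} (hw : Λ.HasWord ξ w) {α : List A} {X : Set V}
    (hX : Tr.mk α X α ∈ ξ) : WPrefix α w := by
  rcases eq_or_ne α [] with rfl | hα
  · exact wprefix_nil w
  · exact (hw α hα).mp ⟨X, hX⟩

lemma IsFilterES.hasWord_wappend (hW : Λ.IsWLR) (hξ : Λ.IsFilterES ξ) {β : List A}
    {X : Set V} (hX : Tr.mk β X β ∈ ξ) {γ : Word A}
    (h : ∀ δ : List A, δ ≠ [] → ((∃ D, Tr.mk (β ++ δ) D (β ++ δ) ∈ ξ) ↔ WPrefix δ γ)) :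
    Λ.HasWord ξ (wappend β γ) := by
  intro ε hε
  rw [wprefix_wappend_iff]
  constructor
  · rintro ⟨B, hB⟩
    rcases hξ.prefix_or_prefix hB hX with hp | ⟨δ, rfl⟩
    · exact Or.inl hp
    rcases eq_or_ne δ [] with rfl | hδ
    · exact Or.inl (by simp)
    · exact Or.inr ⟨δ, rfl, (h δ hδ).mp ⟨B, hB⟩⟩
  · rintro (hp | ⟨δ, rfl, hδγ⟩)
    · exact hξ.exists_mk_mem_of_prefix hW hX hp hε
    rcases eq_or_ne δ [] with rfl | hδ
    · exact ⟨X, by simpa using hX⟩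
    · exact (h δ hδ).mpr hδγ

lemma IsFilterES.hasWord_of_Hcut_eq (hW : Λ.IsWLR) (hη : Λ.IsFilterES η)
    (hξ : Λ.IsFilterES ξ) {α β : List A} (hH : Λ.Hcut α η = Λ.Hcut β ξ) {γ : Word A}
    (hw : Λ.HasWord η (wappend α γ)) {X : Set V} (hX : Tr.mk β X β ∈ ξ) :
    Λ.HasWord ξ (wappend β γ) :=
  hξ.hasWord_wappend hW hX fun δ hδ => by
    rw [← hξ.exists_mk_mem_Hcut_iff, ← hH, hη.exists_mk_mem_Hcut_iff,
      hw _ (by simp [hδ]), wprefix_append_wappend_iff]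

lemma InGamma.isTightFilter {m : ℤ} (h : Λ.InGamma η m ξ) :
    Λ.IsTightFilter η ∧ Λ.IsTightFilter ξ := by
  obtain ⟨_, _, _, -, -, -, hη, hξ, -⟩ := h
  exact ⟨hη.1, hξ.1⟩

lemma InGamma.exists_hasWord {m : ℤ} (h : Λ.InGamma η m ξ) : ∃ w, Λ.HasWord η w := by
  obtain ⟨_, _, _, -, -, -, hη, -⟩ := h
  exact ⟨_, hη.2⟩

end Tails

section BasicSets

variable {Λ} {α β : List A} {X : Set V}

lemma ZrawGen_subset_VrdRaw (hW : Λ.IsWLR) (hX : X ∈ Λ.Aset α) {n : ℕ}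
    {δ : Fin n → List A} {B : Fin n → Set V} (hB : ∀ i, B i ∈ Λ.Aset (β ++ δ i)) :
    Λ.ZrawGen α β (Tr.mk β X β) (List.ofFn fun i => Tr.mk (β ++ δ i) (B i) (β ++ δ i)) ⊆
      Λ.VrdRaw
        (Λ.VrawGen (Tr.mk α X α) (List.ofFn fun i => Tr.mk (α ++ δ i) (B i) (α ++ δ i)))
        (Λ.VrawGen (Tr.mk β X β) (List.ofFn fun i => Tr.mk (β ++ δ i) (B i) (β ++ δ i)))
        α.length β.length := by
  rintro ⟨η, m, ξ⟩ ⟨hΓ, hm, hXξ, hBξ, -, -, -, hH⟩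
  obtain ⟨hη, hξ⟩ := hΓ.isTightFilter
  have hXη : Tr.mk α X α ∈ η := by
    simpa using hη.1.mk_append_mem_of_Hcut_eq hH (δ := [])
      (by simpa using hX) (by simpa using hXξ)
  refine ⟨hΓ, hm, ⟨hη, hXη, ?_⟩, ⟨hξ, hXξ, hBξ⟩, ?_⟩
  · simp only [List.mem_ofFn]
    rintro _ ⟨i, rfl⟩ hi
    exact hBξ _ (List.mem_ofFn.mpr ⟨i, rfl⟩) (hξ.1.mk_append_mem_of_Hcut_eq hH.symm (hB i) hi)
  · rwa [hη.1.sigmaMap_iterate_eq_Hcut hW hXη, hξ.1.sigmaMap_iterate_eq_Hcut hW hXξ]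

lemma VrdRaw_subset_ZrawGen (hW : Λ.IsWLR) (es fs : List (Tr V A)) :
    Λ.VrdRaw (Λ.VrawGen (Tr.mk α X α) fs) (Λ.VrawGen (Tr.mk β X β) es) α.length β.length ⊆
      Λ.ZrawGen α β (Tr.mk β X β) es := by
  rintro ⟨η, m, ξ⟩ ⟨hΓ, hm, ⟨hη, hXη, -⟩, ⟨hξ, hXξ, hes⟩, hσ⟩
  have hH : Λ.Hcut α η = Λ.Hcut β ξ := by
    rwa [hη.1.sigmaMap_iterate_eq_Hcut hW hXη, hξ.1.sigmaMap_iterate_eq_Hcut hW hXξ] at hσ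
  obtain ⟨w, hw⟩ := hΓ.exists_hasWord
  obtain ⟨γ, rfl⟩ := exists_eq_wappend_of_wprefix (hw.wprefix_of_mk_mem hXη)
  exact ⟨hΓ, hm, hXξ, hes, γ, hw, hη.1.hasWord_of_Hcut_eq hW hξ.1 hH hw hXξ, hH⟩

end BasicSets

theorem statement_7 (hΛ : Λ.IsNormal) (α β : List A) (X : Set V)
    (hs : Tr.mk α X β ∈ Λ.SSet) (n : ℕ) (δ : Fin n → List A) (B : Fin n → Set V)
    (he : ∀ i, Tr.mk (β ++ δ i) (B i) (β ++ δ i) ∈ Λ.ESet) :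
    Set.InjOn (Λ.sigmaMap)^[α.length]
      (Λ.VrawGen (Λ.tmul (Tr.mk α X β) (Tr.tstar (Tr.mk α X β)))
        (List.ofFn fun i => Tr.mk (α ++ δ i) (B i) (α ++ δ i))) ∧
    Set.InjOn (Λ.sigmaMap)^[β.length]
      (Λ.VrawGen (Λ.tmul (Tr.tstar (Tr.mk α X β)) (Tr.mk α X β))
        (List.ofFn fun i => Tr.mk (β ++ δ i) (B i) (β ++ δ i))) ∧
    Λ.ZrawGen α β (Λ.tmul (Tr.tstar (Tr.mk α X β)) (Tr.mk α X β))
        (List.ofFn fun i => Tr.mk (β ++ δ i) (B i) (β ++ δ i)) =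
      Λ.VrdRaw
        (Λ.VrawGen (Λ.tmul (Tr.mk α X β) (Tr.tstar (Tr.mk α X β)))
          (List.ofFn fun i => Tr.mk (α ++ δ i) (B i) (α ++ δ i)))
        (Λ.VrawGen (Λ.tmul (Tr.tstar (Tr.mk α X β)) (Tr.mk α X β))
          (List.ofFn fun i => Tr.mk (β ++ δ i) (B i) (β ++ δ i)))
        α.length β.length := by
  obtain ⟨-, -, hXα, -, hX⟩ := Λ.mk_mem_SSet_iff.mp hs
  have hW := hΛ.toIsWLR
  simp only [Tr.tstar, Λ.tmul_mk_mk_of_eq (X := X) (Y := X) (by rwa [Set.inter_self]),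
    Set.inter_self]
  have hB i : B i ∈ Λ.Aset (β ++ δ i) := (Λ.mk_mem_ESet_iff.mp (he i)).2.1
  exact ⟨(injOn_sigmaMap_iterate hW α X).mono fun _ hξ => And.intro hξ.1.1 hξ.2.1,
    (injOn_sigmaMap_iterate hW β X).mono fun _ hξ => And.intro hξ.1.1 hξ.2.1,
    (ZrawGen_subset_VrdRaw hW hXα hB).antisymm (VrdRaw_subset_ZrawGen hW _ _)⟩

end LblSp
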